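/- On the 8-dimensional 5-step nilpotent Lie algebra g = ℝ⁸ with the given (indefinite) metric B, the polynomials P₃(X) = x₄x₇ - x₃x₈ - ½x₆² and P₄(X) = x₁x₈ + x₅x₄ + x₆x₂ + x₇x₃ are invariant under the transadjoint action: their B-gradients ∇P₃(X) = -x₄e₄ + x₈e₅ - x₆e₆ - x₇e₇ - x₃e₈ and ∇P₄(X) = x₈e₁ + x₆e₂ - x₄e₃ - x₃e₄ - x₇e₅ + x₂e₆ - x₅e₇ + x₁e₈ satisfy ad^t_{∇P₃(X)} X = 0 and ad^t_{∇P₄(X)} X = 0 for all X ∈ ℝ⁸. -/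

import Mathlib

/-- The transadjoint action `ad^t_X Y` on the 8-dimensional 5-step nilpotent Lie algebra
with brackets `[e₁,e₄]=-e₆`, `[e₁,e₆]=-e₇`, `[e₁,e₂]=e₅`, `[e₁,e₃]=e₂`, `[e₄,e₂]=-e₈`,
`[e₆,e₃]=-e₈`, `[e₂,e₃]=e₄`, `[e₅,e₂]=e₇`, `[e₅,e₃]=-e₆`, with respect to the metric `B8`. -/
def adt8 (X Y : Fin 8 → ℝ) : Fin 8 → ℝ :=
  ![X 1 * Y 2 - X 2 * Y 1 + X 3 * Y 5 - X 5 * Y 3,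
    -(X 0 * Y 2) + X 2 * Y 6 - X 3 * Y 7 - X 4 * Y 3,
    -(X 1 * Y 3) - X 2 * Y 5,
    0,
    -(X 0 * Y 1) + X 1 * Y 6 + X 4 * Y 5 + X 5 * Y 7,
    X 0 * Y 3 + X 2 * Y 7,
    X 0 * Y 5 - X 1 * Y 7,
    0]

/-- The indefinite metric with `B(e₁,e₁)=B(e₂,e₂)=B(e₆,e₆)=B(e₈,e₈)=1`,
`B(e₃,e₅)=B(e₄,e₇)=-1`, all other pairings zero. -/
def B8 (X Y : Fin 8 → ℝ) : ℝ :=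
  X 0 * Y 0 + X 1 * Y 1 + X 5 * Y 5 + X 7 * Y 7
    - (X 2 * Y 4 + X 4 * Y 2) - (X 3 * Y 6 + X 6 * Y 3)

/-- `P₃(X) = x₄x₇ - x₃x₈ - ½x₆²`. -/
noncomputable def P3 (X : Fin 8 → ℝ) : ℝ := X 3 * X 6 - X 2 * X 7 - X 5 ^ 2 / 2

/-- `P₄(X) = x₁x₈ + x₅x₄ + x₆x₂ + x₇x₃`. -/
def P4 (X : Fin 8 → ℝ) : ℝ := X 0 * X 7 + X 4 * X 3 + X 5 * X 1 + X 6 * X 2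

/-- `∇P₃(X) = -x₄e₄ + x₈e₅ - x₆e₆ - x₇e₇ - x₃e₈`. -/
def gradP3 (X : Fin 8 → ℝ) : Fin 8 → ℝ := ![0, 0, 0, -X 3, X 7, -X 5, -X 6, -X 2]

/-- `∇P₄(X) = x₈e₁ + x₆e₂ - x₄e₃ - x₃e₄ - x₇e₅ + x₂e₆ - x₅e₇ + x₁e₈`. -/
def gradP4 (X : Fin 8 → ℝ) : Fin 8 → ℝ :=
  ![X 7, X 5, -X 3, -X 2, -X 6, X 1, -X 4, X 0]



@[simp] lemma vec8_5 {α} (a b c d e f g h : α) : ![a,b,c,d,e,f,g,h] 5 = f := rfl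
@[simp] lemma vec8_6 {α} (a b c d e f g h : α) : ![a,b,c,d,e,f,g,h] 6 = g := rfl
@[simp] lemma vec8_7 {α} (a b c d e f g h : α) : ![a,b,c,d,e,f,g,h] 7 = h := rfl

abbrev pr8 (i : Fin 8) : (Fin 8 → ℝ) →L[ℝ] ℝ := ContinuousLinearMap.proj i

lemma hasFDerivAt_P3 (X : Fin 8 → ℝ) :
    HasFDerivAt P3 ((X 3 • pr8 6 + X 6 • pr8 3 - (X 2 • pr8 7 + X 7 • pr8 2) - X 5 • pr8 5)) X := by
  have h : ∀ i : Fin 8, HasFDerivAt (fun f : Fin 8 → ℝ => f i) (pr8 i) X :=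
    fun i => hasFDerivAt_apply i X
  have hP : P3 = fun X : Fin 8 → ℝ => X 3 * X 6 - X 2 * X 7 - 2⁻¹ * (X 5 * X 5) := by
    funext Z; simp [P3]; ring
  rw [hP]
  have := (((h 3).mul (h 6)).sub ((h 2).mul (h 7))).sub (((h 5).mul (h 5)).const_mul (2⁻¹:ℝ))
  refine this.congr_fderiv ?_
  ext Y
  simp [pr8]
  ring

lemma hasFDerivAt_P4 (X : Fin 8 → ℝ) :
    HasFDerivAt P4 ((X 0 • pr8 7 + X 7 • pr8 0 + (X 4 • pr8 3 + X 3 • pr8 4)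
      + (X 5 • pr8 1 + X 1 • pr8 5) + (X 6 • pr8 2 + X 2 • pr8 6))) X := by
  have h : ∀ i : Fin 8, HasFDerivAt (fun f : Fin 8 → ℝ => f i) (pr8 i) X :=
    fun i => hasFDerivAt_apply i X
  have := ((((h 0).mul (h 7)).add ((h 4).mul (h 3))).add ((h 5).mul (h 1))).add ((h 6).mul (h 2))
  exact this

/-- `gradP3`, `gradP4` are the `B`-gradients of `P₃`, `P₄`, and these functions are
invariant under the transadjoint action: `ad^t_{∇P₃(X)} X = 0 = ad^t_{∇P₄(X)} X`. -/
theorem stmt_16 : ∀ X : Fin 8 → ℝ,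
    (∀ Y : Fin 8 → ℝ, B8 (gradP3 X) Y = fderiv ℝ P3 X Y) ∧
    (∀ Y : Fin 8 → ℝ, B8 (gradP4 X) Y = fderiv ℝ P4 X Y) ∧
    adt8 (gradP3 X) X = 0 ∧
    adt8 (gradP4 X) X = 0 := by
  intro X
  refine ⟨?_, ?_, ?_, ?_⟩
  · intro Y
    rw [(hasFDerivAt_P3 X).fderiv]
    simp [B8, gradP3, pr8, Matrix.cons_val_succ]
    ring
  · intro Y
    rw [(hasFDerivAt_P4 X).fderiv]
    simp [B8, gradP4, pr8, Matrix.cons_val_succ]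
    ring
  · funext i
    fin_cases i <;> simp [adt8, gradP3, Matrix.cons_val_succ] <;> ring
  · funext i
    fin_cases i <;> simp [adt8, gradP4, Matrix.cons_val_succ] <;> ring
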